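/- (Twisted Fischer–Koch configurations, negative center) For every integer k ≥ 2, the configuration consisting of k + 1 points, namely the origin 0 with charge −1 together with the k points √((k+1)/2) · e^{2πim/k}, m = 0, …, k−1, each with charge −1, is balanced. -/

import Mathlib

/-- The force at a point of a configuration: `F j = conj (p j) + ∑_{k ≠ j} ε k / (p j - p k)`. -/
noncomputable def force {ι : Type*} [Fintype ι] [DecidableEq ι]
    (p ε : ι → ℂ) (j : ι) : ℂ :=
  (starRingEnd ℂ) (p j) + ∑ k ∈ Finset.univ.erase j, ε k / (p j - p k)

/-- A configuration is balanced if all forces vanish. -/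
def IsBalancedConfig {ι : Type*} [Fintype ι] [DecidableEq ι] (p ε : ι → ℂ) : Prop :=
  ∀ j, force p ε j = 0

/-!
Put `ζ = e^{2πi/k}`, so the vertices are `r ζ^m`. At the origin the pulls of the vertices add up
to a multiple of `∑ ζ^{-m} = 0`. At the vertex `r ζ^m`, rotating the polygon turns the sum over
the other vertices into `(r ζ^m)⁻¹ ∑_{n ≠ 0} (1 - ζ^n)⁻¹`, and pairing `n` with `-n` through
`(1 - z)⁻¹ + (1 - z⁻¹)⁻¹ = 1` shows that this sum is `(k - 1)/2`. Since `conj ζ = ζ⁻¹`, the force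
there is `ζ^{-m} (r - (k + 1)/(2r))`, which vanishes for `r² = (k + 1)/2`.
-/

open Finset Complex ComplexConjugate

section RootsOfUnity

lemma pow_val_fin_add {M : Type*} [Monoid M] {ζ : M} {k : ℕ} (hζ : ζ ^ k = 1) (m n : Fin k) :
    ζ ^ ((m + n : Fin k) : ℕ) = ζ ^ (m : ℕ) * ζ ^ (n : ℕ) := by
  rw [Fin.val_add, ← pow_eq_pow_mod _ hζ, pow_add]

lemma pow_val_fin_neg {M : Type*} [DivisionMonoid M] {ζ : M} {k : ℕ} [NeZero k]
    (hζ : ζ ^ k = 1) (n : Fin k) : ζ ^ ((-n : Fin k) : ℕ) = (ζ ^ (n : ℕ))⁻¹ := by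
  refine eq_inv_of_mul_eq_one_left ?_
  rw [← pow_val_fin_add hζ, neg_add_cancel, Fin.val_zero, pow_zero]

lemma sum_pow_val_fin_mul {M N : Type*} [Monoid M] [AddCommMonoid N] {ζ : M} {k : ℕ} [NeZero k]
    (hζ : ζ ^ k = 1) (m : Fin k) (f : M → N) :
    ∑ n : Fin k, f (ζ ^ (m : ℕ) * ζ ^ (n : ℕ)) = ∑ n : Fin k, f (ζ ^ (n : ℕ)) := by
  simp only [← pow_val_fin_add hζ]
  exact Fintype.sum_equiv (Equiv.addLeft m) _ _ fun _ ↦ rfl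

lemma inv_one_sub_add_inv_one_sub_inv {K : Type*} [Field K] {z : K} (h0 : z ≠ 0) (h1 : z ≠ 1) :
    (1 - z)⁻¹ + (1 - z⁻¹)⁻¹ = 1 := by
  have : 1 - z ≠ 0 := sub_ne_zero.mpr h1.symm
  field_simp
  ring

/-- The term `n = 0` of the sum is `0⁻¹ = 0`; the others pair off as `n`, `-n`. -/
lemma IsPrimitiveRoot.two_mul_sum_inv_one_sub_pow {K : Type*} [Field K] {ζ : K} {k : ℕ}
    [NeZero k] (hζ : IsPrimitiveRoot ζ k) :
    2 * ∑ n : Fin k, (1 - ζ ^ (n : ℕ))⁻¹ = k - 1 := by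
  have hζ0 : ζ ≠ 0 := hζ.ne_zero (NeZero.ne k)
  have hreflect : ∑ n : Fin k, (1 - ζ ^ (n : ℕ))⁻¹ = ∑ n : Fin k, (1 - (ζ ^ (n : ℕ))⁻¹)⁻¹ := by
    simp only [← pow_val_fin_neg hζ.pow_eq_one]
    exact Fintype.sum_equiv (Equiv.neg _) _ _ fun n ↦ by rw [Equiv.neg_apply, neg_neg]
  have hpair (n : Fin k) : (1 - ζ ^ (n : ℕ))⁻¹ + (1 - (ζ ^ (n : ℕ))⁻¹)⁻¹ =
      1 - if n = 0 then 1 else 0 := by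
    split_ifs with hn
    · simp [hn]
    · rw [sub_zero]
      exact inv_one_sub_add_inv_one_sub_inv (pow_ne_zero _ hζ0)
        (hζ.pow_ne_one_of_pos_of_lt (Fin.val_ne_zero_iff.mpr hn) n.isLt)
  rw [two_mul]
  nth_rewrite 2 [hreflect]
  simp [← sum_add_distrib, hpair]

end RootsOfUnity

/-- The diagonal term `ε j / (p j - p j)` is `ε j / 0 = 0`, so it may be added to the sum. -/
lemma force_eq_conj_add_sum {ι : Type*} [Fintype ι] [DecidableEq ι] (p ε : ι → ℂ) (j : ι) :
    force p ε j = conj (p j) + ∑ i, ε i / (p j - p i) := by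
  rw [force, sum_erase _ (by rw [sub_self, div_zero])]

section CenteredRegularPolygon

variable {k : ℕ} {ζ : ℂ} {r : ℝ} {p ε : Option (Fin k) → ℂ} {b : ℂ}
  (hp₀ : p none = 0) (hp : ∀ m, p (some m) = r * ζ ^ (m : ℕ)) (hε : ∀ m, ε (some m) = b)
include hp₀ hp hε

lemma force_none_eq_zero_of_isPrimitiveRoot (hζ : IsPrimitiveRoot ζ k) (hk : 1 < k) :
    force p ε none = 0 := by
  have hterm (m : Fin k) : ε (some m) / (0 - r * ζ ^ (m : ℕ)) = -b * (r : ℂ)⁻¹ * ζ⁻¹ ^ (m : ℕ) := by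
    rw [hε, zero_sub, div_neg, div_eq_mul_inv, mul_inv, inv_pow]
    ring
  rw [force_eq_conj_add_sum, Fintype.sum_option]
  simp only [hp₀, hp, map_zero, sub_self, div_zero, hterm, ← mul_sum]
  rw [Fin.sum_univ_eq_sum_range (ζ⁻¹ ^ ·), hζ.inv.geom_sum_eq_zero hk]
  simp

lemma force_some_eq_of_isPrimitiveRoot (hζ : IsPrimitiveRoot ζ k) (m : Fin k) :
    force p ε (some m) =
      (r + (ε none + b * (k - 1) / 2) / r) * (ζ ^ (m : ℕ))⁻¹ := by
  have : NeZero k := ⟨m.pos.ne'⟩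
  rw [force_eq_conj_add_sum, Fintype.sum_option]
  simp only [hp₀, hp, hε, sub_zero, map_mul, conj_ofReal]
  set z := ζ ^ (m : ℕ)
  have hconj : conj z = z⁻¹ := by
    rw [map_pow, ← inv_eq_conj (norm_eq_one_of_pow_eq_one hζ.pow_eq_one (NeZero.ne k)), inv_pow]
  have hrotate : ∑ n : Fin k, b / (r * z - r * ζ ^ (n : ℕ)) =
      ∑ n : Fin k, b / (r * z - r * (z * ζ ^ (n : ℕ))) :=
    (sum_pow_val_fin_mul hζ.pow_eq_one m fun w ↦ b / (r * z - r * w)).symm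
  have hterm (n : Fin k) : b / (r * z - r * (z * ζ ^ (n : ℕ))) =
      b * (r * z)⁻¹ * (1 - ζ ^ (n : ℕ))⁻¹ := by
    rw [show (r * z - r * (z * ζ ^ (n : ℕ)) : ℂ) = r * z * (1 - ζ ^ (n : ℕ)) by ring,
      div_eq_mul_inv, mul_inv, mul_assoc]
  have hS : ∑ n : Fin k, (1 - ζ ^ (n : ℕ))⁻¹ = (k - 1) / 2 := by
    linear_combination hζ.two_mul_sum_inv_one_sub_pow / 2
  rw [hconj, hrotate, sum_congr rfl fun n _ ↦ hterm n, ← mul_sum, hS, mul_inv]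
  ring

end CenteredRegularPolygon

/-- (Twisted Fischer–Koch, negative center) For `k ≥ 2`, the configuration of the origin
with charge `-1` together with the `k` points `√((k+1)/2) · e^{2πim/k}`, `m = 0, …, k-1`,
each with charge `-1`, is balanced.  (The index `none` is the origin.) -/
theorem fischerKoch_neg_center_balanced (k : ℕ) (hk : 2 ≤ k) :
    IsBalancedConfig
      (fun i : Option (Fin k) =>
        match i with
        | none => 0
        | some m =>
            (Real.sqrt (((k : ℝ) + 1) / 2) : ℂ) *
              Complex.exp (2 * Real.pi * Complex.I / k) ^ (m : ℕ))
      (fun _ => -1) := by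
  set ζ := exp (2 * Real.pi * I / k)
  set r := √(((k : ℝ) + 1) / 2)
  have hζ : IsPrimitiveRoot ζ k := isPrimitiveRoot_exp k (by omega)
  have hr : (r : ℂ) ≠ 0 := by norm_cast; positivity
  have hr2 : (r : ℂ) ^ 2 = (k + 1) / 2 := by
    rw [← ofReal_pow, Real.sq_sqrt (by positivity)]
    push_cast
    ring
  rintro (_ | m)
  · exact force_none_eq_zero_of_isPrimitiveRoot rfl (fun _ ↦ rfl) (fun _ ↦ rfl) hζ hk
  · rw [force_some_eq_of_isPrimitiveRoot rfl (fun _ ↦ rfl) (fun _ ↦ rfl) hζ]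
    refine mul_eq_zero_of_left ?_ _
    field_simp
    linear_combination 2 * hr2
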